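/- arXiv:2106.14940 — 2 statements merged into one kernel-verified Lean document; each statement's English description precedes it below -/
import Mathlib

section
/- Let c ∈ ℂ with c ≠ 4 and c ≠ −4, and let A, B be the associated Loewner parameters for the driving function λ(t) = c·√(1−t). Then for every t ∈ [0,1): the function w_A(t) = A·√(1−t) satisfies w_A(t) ≠ λ(t) and has derivative 2/(w_A(t) − λ(t)) at t, and likewise w_B(t) = B·√(1−t) satisfies w_B(t) ≠ λ(t) and has derivative 2/(w_B(t) − λ(t)) at t; moreover w_A(1) = w_B(1) = λ(1) = 0. (That is, the Loewner flows started from A and from B are w_A and w_B, and the points A and B are captured exactly at time 1, so A, B ∈ L₁.) -/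
/-!
The driving function `c √(1 - t)` is self-similar, so one looks for flows of the form
`w(t) = z √(1 - t)`. Then `w' = -z / (2 √(1 - t))` while `2 / (w - λ) = 2 / ((z - c) √(1 - t))`,
and these agree exactly when `z (z - c) = -4`, i.e. `z² - c z + 4 = 0`. The quadratic formula
shows that `A` and `B` are its two roots; neither equals `c`, as `c² - c·c + 4 = 4`.
-/

lemma sq_sub_mul_add_eq_zero_of_two_mul_eq_add {K : Type*} [Field K] [CharZero K] {z c s q : K}
    (hs : s ^ 2 = c ^ 2 - 4 * q) (hz : 2 * z = c + s) : z ^ 2 - c * z + q = 0 := by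
  linear_combination (1 / 4 : K) * ((2 * z - c + s) * hz + hs)

lemma hasDerivAt_ofReal_sqrt_one_sub {t : ℝ} (ht : t < 1) :
    HasDerivAt (fun t : ℝ => (Real.sqrt (1 - t) : ℂ)) (-1 / (2 * Real.sqrt (1 - t)) : ℝ) t := by
  have hsub : HasDerivAt (fun t : ℝ => 1 - t) (-1) t := by
    simpa using (hasDerivAt_id t).const_sub 1
  have hsqrt := (Real.hasDerivAt_sqrt (sub_pos.2 ht).ne').comp t hsub
  exact (hsqrt.congr_deriv (by ring)).ofReal_comp

lemma ofReal_sqrt_one_sub_ne_zero {t : ℝ} (ht : t < 1) : (Real.sqrt (1 - t) : ℂ) ≠ 0 :=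
  Complex.ofReal_ne_zero.2 (Real.sqrt_pos.2 (sub_pos.2 ht)).ne'

lemma ne_of_sq_sub_mul_add_four_eq_zero {K : Type*} [Field K] [CharZero K] {z c : K}
    (hz : z ^ 2 - c * z + 4 = 0) : z ≠ c := by
  rintro rfl
  have : (4 : K) = 0 := by linear_combination hz
  norm_num at this

lemma hasDerivAt_loewner_of_sq_sub_mul_add_four_eq_zero {z c : ℂ}
    (hz : z ^ 2 - c * z + 4 = 0) {t : ℝ} (ht : t < 1) :
    HasDerivAt (fun t : ℝ => z * (Real.sqrt (1 - t) : ℂ))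
      (2 / (z * (Real.sqrt (1 - t) : ℂ) - c * (Real.sqrt (1 - t) : ℂ))) t := by
  have hsqrt := ofReal_sqrt_one_sub_ne_zero ht
  have hzc : z - c ≠ 0 := sub_ne_zero.2 (ne_of_sq_sub_mul_add_four_eq_zero hz)
  refine ((hasDerivAt_ofReal_sqrt_one_sub ht).const_mul z).congr_deriv ?_
  push_cast
  rw [← sub_mul]
  field_simp
  linear_combination -hz

theorem loewner_flow_of_A_and_B_general
    (c A B : ℂ)
    (hA : A = (c + (c ^ 2 - 16) ^ ((1 : ℂ) / 2)) / 2)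
    (hB : B = (c - (c ^ 2 - 16) ^ ((1 : ℂ) / 2)) / 2) :
    (∀ t ∈ Set.Ico (0 : ℝ) 1,
      A * (Real.sqrt (1 - t) : ℂ) ≠ c * (Real.sqrt (1 - t) : ℂ) ∧
      HasDerivAt (fun t : ℝ => A * (Real.sqrt (1 - t) : ℂ))
        (2 / (A * (Real.sqrt (1 - t) : ℂ) - c * (Real.sqrt (1 - t) : ℂ))) t ∧
      B * (Real.sqrt (1 - t) : ℂ) ≠ c * (Real.sqrt (1 - t) : ℂ) ∧
      HasDerivAt (fun t : ℝ => B * (Real.sqrt (1 - t) : ℂ))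
        (2 / (B * (Real.sqrt (1 - t) : ℂ) - c * (Real.sqrt (1 - t) : ℂ))) t) ∧
    A * (Real.sqrt (1 - 1) : ℂ) = 0 ∧
    B * (Real.sqrt (1 - 1) : ℂ) = 0 ∧
    c * (Real.sqrt (1 - 1) : ℂ) = 0 := by
  have hs : ((c ^ 2 - 16) ^ ((1 : ℂ) / 2)) ^ 2 = c ^ 2 - 16 := by
    rw [one_div, Complex.cpow_ofNat_inv_pow]
  have hA2 : A ^ 2 - c * A + 4 = 0 := by
    refine sq_sub_mul_add_eq_zero_of_two_mul_eq_add (by rw [hs]; ring) ?_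
    rw [hA]; ring
  have hB2 : B ^ 2 - c * B + 4 = 0 := by
    refine sq_sub_mul_add_eq_zero_of_two_mul_eq_add (by rw [neg_sq, hs]; ring) ?_
    rw [hB]; ring
  refine ⟨fun t ⟨_, ht⟩ => ?_, by norm_num, by norm_num, by norm_num⟩
  have hsqrt := ofReal_sqrt_one_sub_ne_zero ht
  exact ⟨mt (mul_right_cancel₀ hsqrt) (ne_of_sq_sub_mul_add_four_eq_zero hA2),
    hasDerivAt_loewner_of_sq_sub_mul_add_four_eq_zero hA2 ht,
    mt (mul_right_cancel₀ hsqrt) (ne_of_sq_sub_mul_add_four_eq_zero hB2),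
    hasDerivAt_loewner_of_sq_sub_mul_add_four_eq_zero hB2 ht⟩

theorem loewner_flow_of_A_and_B
    (c A B : ℂ) (hc4 : c ≠ 4) (hc4' : c ≠ -4)
    (hA : A = (c + (c ^ 2 - 16) ^ ((1 : ℂ) / 2)) / 2)
    (hB : B = (c - (c ^ 2 - 16) ^ ((1 : ℂ) / 2)) / 2) :
    (∀ t ∈ Set.Ico (0 : ℝ) 1,
      A * (Real.sqrt (1 - t) : ℂ) ≠ c * (Real.sqrt (1 - t) : ℂ) ∧
      HasDerivAt (fun t : ℝ => A * (Real.sqrt (1 - t) : ℂ))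
        (2 / (A * (Real.sqrt (1 - t) : ℂ) - c * (Real.sqrt (1 - t) : ℂ))) t ∧
      B * (Real.sqrt (1 - t) : ℂ) ≠ c * (Real.sqrt (1 - t) : ℂ) ∧
      HasDerivAt (fun t : ℝ => B * (Real.sqrt (1 - t) : ℂ))
        (2 / (B * (Real.sqrt (1 - t) : ℂ) - c * (Real.sqrt (1 - t) : ℂ))) t) ∧
    A * (Real.sqrt (1 - 1) : ℂ) = 0 ∧
    B * (Real.sqrt (1 - 1) : ℂ) = 0 ∧
    c * (Real.sqrt (1 - 1) : ℂ) = 0 :=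
  loewner_flow_of_A_and_B_general c A B hA hB
end

section
/- Let c ∈ ℂ with c ≠ 4i and c ≠ −4i, let D, E, δ, ε be the associated Loewner parameters for the driving function c√(τ+t), let τ > 0 and s > 0. Suppose g : ℝ → ℂ is continuous on [0,s], g(0) = z, g(s) = c·√(τ+s), for every t ∈ [0,s) the point g(t) satisfies g(t) ≠ c·√(τ+t) and g has derivative 2/(g(t) − c·√(τ+t)) at t, and for every t ∈ [0,s] both g(t) − D·√(τ+t) and g(t) − E·√(τ+t) lie outside the slit (−∞, 0]. Then δ·Log(E) + ε·Log(D) + Real.log(√(τ+s)) = δ·Log(z − D·√τ) + ε·Log(z − E·√τ), where Log is the principal complex logarithm and Real.log(√(τ+s)) is regarded as a complex number. -/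
/-!
Along the flow, `δ log (g t - D √(τ+t)) + ε log (g t - E √(τ+t))` is constant: `D, E` are
the roots of `X² - cX - 4` and the weights satisfy `δ + ε = 1`, `δ D + ε E = 0`,
`δ E + ε D = c`, which make the logarithmic derivatives dictated by the Loewner equation
cancel. At the capture time the two arguments become `E √(τ+s)` and `D √(τ+s)`, and comparing
with `t = 0` gives the identity.
-/

open Complex

section

variable {c D E δ ε : ℂ} {τ : ℝ} {g : ℝ → ℂ}

structure IsLoewnerParams (c D E δ ε : ℂ) : Prop where
  add_eq : D + E = c
  weight_add : δ + ε = 1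
  weighted_swap : δ * E + ε * D = c
  weighted_self : δ * D + ε * E = 0
  mul_eq : D * E = -4

theorem sq_add_sixteen_ne_zero (hc4 : c ≠ 4 * I) (hc4' : c ≠ -4 * I) : c ^ 2 + 16 ≠ 0 := by
  have hfac : c ^ 2 + 16 = (c - 4 * I) * (c + 4 * I) := by linear_combination 16 * I_sq
  rw [hfac]
  exact mul_ne_zero (sub_ne_zero.mpr hc4) (fun h => hc4' (by linear_combination h))

theorem isLoewnerParams_of_sq_eq {S : ℂ} (hS : S ^ 2 = c ^ 2 + 16) (hS0 : S ≠ 0)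
    (hD : D = (c + S) / 2) (hE : E = (c - S) / 2)
    (hδ : δ = (1 - c / S) / 2) (hε : ε = (1 + c / S) / 2) :
    IsLoewnerParams c D E δ ε := by
  subst hD hE hδ hε
  refine ⟨by ring, by ring, ?_, ?_, by linear_combination (-1 / 4 : ℂ) * hS⟩
  · field_simp; ring
  · field_simp; ring

theorem IsLoewnerParams.D_ne_zero (hp : IsLoewnerParams c D E δ ε) : D ≠ 0 := by
  rintro rfl; simpa using hp.mul_eq

theorem IsLoewnerParams.E_ne_zero (hp : IsLoewnerParams c D E δ ε) : E ≠ 0 := by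
  rintro rfl; simpa using hp.mul_eq

theorem isLoewnerParams_of_principal_sqrt (hc4 : c ≠ 4 * I) (hc4' : c ≠ -4 * I)
    (hD : D = (c + (c ^ 2 + 16) ^ ((1 : ℂ) / 2)) / 2)
    (hE : E = (c - (c ^ 2 + 16) ^ ((1 : ℂ) / 2)) / 2)
    (hδ : δ = (1 - c / (c ^ 2 + 16) ^ ((1 : ℂ) / 2)) / 2)
    (hε : ε = (1 + c / (c ^ 2 + 16) ^ ((1 : ℂ) / 2)) / 2) :
    IsLoewnerParams c D E δ ε := by
  have hS : ((c ^ 2 + 16) ^ ((1 : ℂ) / 2)) ^ 2 = c ^ 2 + 16 := by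
    rw [one_div]; exact cpow_ofNat_inv_pow _ 2
  refine isLoewnerParams_of_sq_eq hS (fun h0 => ?_) hD hE hδ hε
  exact sq_add_sixteen_ne_zero hc4 hc4' (by rw [← hS, h0]; ring)

theorem IsLoewnerParams.weighted_log_deriv_eq_zero (hp : IsLoewnerParams c D E δ ε)
    {G R : ℂ} (hR : R ≠ 0)
    (hGD : G - D * R ≠ 0) (hGE : G - E * R ≠ 0) (hGc : G - c * R ≠ 0) :
    δ * ((2 / (G - c * R) - D / (2 * R)) / (G - D * R))
      + ε * ((2 / (G - c * R) - E / (2 * R)) / (G - E * R)) = 0 := by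
  -- as atoms, the three differences are visibly nonzero to `field_simp`
  generalize hA : G - D * R = A at *
  generalize hB : G - E * R = B at *
  generalize hC : G - c * R = C at *
  field_simp
  rw [← hA, ← hB, ← hC]
  linear_combination 4 * R * (G * hp.weight_add - R * hp.weighted_swap)
    - (G - c * R) * (G * hp.weighted_self - R * D * E * hp.weight_add - R * hp.mul_eq)

theorem hasDerivAt_ofReal_sqrt_add {t : ℝ} (ht : 0 < τ + t) :
    HasDerivAt (fun u : ℝ => (√(τ + u) : ℂ)) (1 / (2 * √(τ + t))) t := by
  have := ((Real.hasDerivAt_sqrt ht.ne').comp t ((hasDerivAt_id t).const_add τ)).ofReal_comp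
  simpa using this

theorem hasDerivAt_log_sub_mul_sqrt {g' : ℂ} {t : ℝ} (a : ℂ)
    (hg : HasDerivAt g g' t) (ht : 0 < τ + t) (hslit : g t - a * √(τ + t) ∈ slitPlane) :
    HasDerivAt (fun u => log (g u - a * √(τ + u)))
      ((g' - a / (2 * √(τ + t))) / (g t - a * √(τ + t))) t := by
  have := (hg.sub ((hasDerivAt_ofReal_sqrt_add ht).const_mul a)).clog_real hslit
  simpa only [mul_one_div, Pi.sub_apply] using this

noncomputable def loewnerInvariant (D E δ ε : ℂ) (τ : ℝ) (g : ℝ → ℂ) (t : ℝ) : ℂ :=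
  δ * log (g t - D * √(τ + t)) + ε * log (g t - E * √(τ + t))

theorem IsLoewnerParams.hasDerivAt_loewnerInvariant (hp : IsLoewnerParams c D E δ ε) {t : ℝ}
    (ht : 0 < τ + t) (hgD : g t - D * √(τ + t) ∈ slitPlane)
    (hgE : g t - E * √(τ + t) ∈ slitPlane)
    (hgc : g t ≠ c * √(τ + t)) (hg : HasDerivAt g (2 / (g t - c * √(τ + t))) t) :
    HasDerivAt (loewnerInvariant D E δ ε τ g) 0 t := by
  have hR : (√(τ + t) : ℂ) ≠ 0 := ofReal_ne_zero.mpr (Real.sqrt_pos.mpr ht).ne'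
  have := ((hasDerivAt_log_sub_mul_sqrt D hg ht hgD).const_mul δ).add
    ((hasDerivAt_log_sub_mul_sqrt E hg ht hgE).const_mul ε)
  rwa [hp.weighted_log_deriv_eq_zero hR (slitPlane_ne_zero hgD) (slitPlane_ne_zero hgE)
    (sub_ne_zero.mpr hgc)] at this

theorem continuousOn_loewnerInvariant {s : Set ℝ} (hg : ContinuousOn g s)
    (hslit : ∀ t ∈ s,
      g t - D * √(τ + t) ∈ slitPlane ∧ g t - E * √(τ + t) ∈ slitPlane) :
    ContinuousOn (loewnerInvariant D E δ ε τ g) s := by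
  have hR : ContinuousOn (fun u : ℝ => (√(τ + u) : ℂ)) s := by fun_prop
  exact (continuousOn_const.mul ((hg.sub (continuousOn_const.mul hR)).clog
    fun t ht => (hslit t ht).1)).add
      (continuousOn_const.mul ((hg.sub (continuousOn_const.mul hR)).clog
        fun t ht => (hslit t ht).2))

theorem IsLoewnerParams.loewnerInvariant_of_capture (hp : IsLoewnerParams c D E δ ε) {s : ℝ}
    (hs : 0 < τ + s) (hgs : g s = c * √(τ + s)) :
    loewnerInvariant D E δ ε τ g s = δ * log E + ε * log D + Real.log √(τ + s) := by
  have hR : 0 < √(τ + s) := Real.sqrt_pos.mpr hs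
  have hgD : g s - D * √(τ + s) = E * √(τ + s) := by rw [hgs, ← hp.add_eq]; ring
  have hgE : g s - E * √(τ + s) = D * √(τ + s) := by rw [hgs, ← hp.add_eq]; ring
  rw [loewnerInvariant, hgD, hgE, log_mul_ofReal _ hR _ hp.E_ne_zero,
    log_mul_ofReal _ hR _ hp.D_ne_zero]
  linear_combination (Real.log √(τ + s) : ℂ) * hp.weight_add

end

theorem loewner_tip_equation_sqrt_tau_add_t
    (c D E δ ε : ℂ) (hc4 : c ≠ 4 * Complex.I) (hc4' : c ≠ -4 * Complex.I)
    (hD : D = (c + (c ^ 2 + 16) ^ ((1 : ℂ) / 2)) / 2)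
    (hE : E = (c - (c ^ 2 + 16) ^ ((1 : ℂ) / 2)) / 2)
    (hδ : δ = (1 - c / (c ^ 2 + 16) ^ ((1 : ℂ) / 2)) / 2)
    (hε : ε = (1 + c / (c ^ 2 + 16) ^ ((1 : ℂ) / 2)) / 2)
    (τ s : ℝ) (hτ : 0 < τ) (hs : 0 < s)
    (g : ℝ → ℂ) (z : ℂ)
    (hcont : ContinuousOn g (Set.Icc 0 s))
    (hg0 : g 0 = z) (hgs : g s = c * (Real.sqrt (τ + s) : ℂ))
    (h : ∀ t ∈ Set.Ico (0 : ℝ) s,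
      g t ≠ c * (Real.sqrt (τ + t) : ℂ) ∧
      HasDerivAt g (2 / (g t - c * (Real.sqrt (τ + t) : ℂ))) t)
    (hslit : ∀ t ∈ Set.Icc (0 : ℝ) s,
      (g t - D * (Real.sqrt (τ + t) : ℂ)) ∈ Complex.slitPlane ∧
      (g t - E * (Real.sqrt (τ + t) : ℂ)) ∈ Complex.slitPlane) :
    δ * Complex.log E + ε * Complex.log D
      + (Real.log (Real.sqrt (τ + s)) : ℂ)
      = δ * Complex.log (z - D * (Real.sqrt τ : ℂ))
        + ε * Complex.log (z - E * (Real.sqrt τ : ℂ)) := by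
  have hp := isLoewnerParams_of_principal_sqrt hc4 hc4' hD hE hδ hε
  have hconst := constant_of_has_deriv_right_zero (continuousOn_loewnerInvariant hcont hslit)
    fun t ht => (hp.hasDerivAt_loewnerInvariant (by linarith [ht.1])
      (hslit t (Set.Ico_subset_Icc_self ht)).1 (hslit t (Set.Ico_subset_Icc_self ht)).2
      (h t ht).1 (h t ht).2).hasDerivWithinAt
  rw [← hp.loewnerInvariant_of_capture (by linarith) hgs, hconst s ⟨hs.le, le_rfl⟩]
  simp [loewnerInvariant, hg0]
end
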